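/- arXiv:2007.10197 — 5 statements merged into one kernel-verified Lean document; each statement's English description precedes it below -/
import Mathlib

section
/- Let σ be a linear automorphism of V and let (δ_{i,r}, δ_{i,l})_{i≥1} satisfy the sequence-pair recurrence for σ. Then for every integer d ≥ 2, ∑_{i=1}^{d−1} (−1)^{i+1} (σ^{⊗(d−i−1)} ⊗ δ_{i,l} ⊗ id_V) = (−1)^{d+1} ∑_{i=1}^{d−1} (−1)^i (δ_{i,r} ⊗ id_V^{⊗(d−i)}) as linear maps V^{⊗d} → V^{⊗(d+1)}. -/
/-!
Write `L_i^d = σ^{⊗(d-i-1)} ⊗ δ_{i,l} ⊗ id_V` (`padSigma`), `R_i^d = δ_{i,r} ⊗ id^{⊗(d-i)}` and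
`T_i^d = δ_{i,l} ⊗ id^{⊗(d-i)}` (both `padRight`), and argue by induction on `d`. Since
`L_i^{d+1} = σ ⊗ L_i^d` (`tensorLeft`) for `i < d` and `L_d^{d+1} = T_d^{d+1}`, the left side
for `d + 1` is `σ ⊗ (left side for d) + (-1)^(d+1) T_d^{d+1}`. Tensoring the recurrence with identities gives
`(-1)^i σ ⊗ R_i^d = (-1)^i R_{i+1}^{d+1} - (T_{i+1}^{d+1} - T_i^{d+1})`, so after the induction
hypothesis the `T`'s telescope to `T_d - T_1`, and `T_1 = R_1` because `δ_{1,r} = δ_{1,l}`.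
-/

open scoped TensorProduct
open PiTensorProduct

namespace OrePaper

variable (k : Type*) [Field k] (V : Type*) [AddCommGroup V] [Module k V]

/-- The canonical isomorphism `V^{⊗a} ⊗ V^{⊗b} ≃ V^{⊗(a+b)}`. -/
noncomputable abbrev mulPow (a b : ℕ) :
    ((⨂[k]^a V) ⊗[k] (⨂[k]^b V)) ≃ₗ[k] ⨂[k]^(a+b) V :=
  TensorPower.mulEquiv

variable {k V}

/-- `f ⊗ g` for linear maps between tensor powers, under the canonical identifications. -/
noncomputable def tmap {a b c d : ℕ} (f : (⨂[k]^a V) →ₗ[k] ⨂[k]^c V)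
    (g : (⨂[k]^b V) →ₗ[k] ⨂[k]^d V) :
    (⨂[k]^(a+b) V) →ₗ[k] ⨂[k]^(c+d) V :=
  (mulPow k V c d).toLinearMap ∘ₗ TensorProduct.map f g ∘ₗ (mulPow k V a b).symm.toLinearMap

/-- Transport a linear map between tensor powers along equalities of exponents
(the canonical associativity identifications). -/
noncomputable def conv {a b a' b' : ℕ} (h1 : a = a') (h2 : b = b')
    (f : (⨂[k]^a V) →ₗ[k] ⨂[k]^b V) : (⨂[k]^a' V) →ₗ[k] ⨂[k]^b' V :=
  (TensorPower.cast k V h2).toLinearMap ∘ₗ f ∘ₗ (TensorPower.cast k V h1.symm).toLinearMap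

/-- `f^{⊗n}` for a linear endomorphism `f` of `V`. -/
noncomputable def pmap (f : V →ₗ[k] V) (n : ℕ) : (⨂[k]^n V) →ₗ[k] ⨂[k]^n V :=
  PiTensorProduct.map (fun _ => f)

/-- A family `(δ_{i,r}, δ_{i,l})_{i ≥ 1}` of linear maps
`δ_{i,r} : V^{⊗i} → V^{⊗i} ⊗ V` and `δ_{i,l} : V^{⊗i} → V ⊗ V^{⊗i}` (written, under the
canonical identifications, as maps `V^{⊗i} → V^{⊗(i+1)}`) satisfies the *sequence-pair
recurrence* for a linear automorphism `σ` of `V` if `δ_{1,r} = δ_{1,l}` and, for all `i ≥ 2`,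
`δ_{i,r} + (-1)^i δ_{i,l} = σ ⊗ δ_{i-1,r} + (-1)^i (δ_{i-1,l} ⊗ id_V)`. -/
def SeqPairRec (σ : V ≃ₗ[k] V)
    (δr δl : (i : ℕ) → (⨂[k]^i V) →ₗ[k] ⨂[k]^(i+1) V) : Prop :=
  δr 1 = δl 1 ∧
  ∀ (i : ℕ) (hi : 2 ≤ i),
    δr i + ((-1 : k)^i) • δl i
      = conv (by omega) (by omega) (tmap (pmap σ.toLinearMap 1) (δr (i-1)))
        + ((-1 : k)^i) • conv (by omega) (by omega) (tmap (δl (i-1)) (pmap (LinearMap.id) 1))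

lemma mulPow_tprod {a b : ℕ} (v : Fin a → V) (w : Fin b → V) :
    mulPow k V a b (tprod k v ⊗ₜ tprod k w) = tprod k (Fin.append v w) :=
  TensorPower.tprod_mul_tprod k v w

lemma mulPow_assoc {a b c : ℕ} (x : ⨂[k]^a V) (y : ⨂[k]^b V) (z : ⨂[k]^c V) :
    TensorPower.cast k V (Nat.add_assoc a b c) (mulPow k V (a+b) c (mulPow k V a b (x ⊗ₜ y) ⊗ₜ z))
      = mulPow k V a (b+c) (x ⊗ₜ mulPow k V b c (y ⊗ₜ z)) :=
  TensorPower.mul_assoc x y z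

lemma ext_mulPow {a b : ℕ} {M : Type*} [AddCommGroup M] [Module k M]
    {F G : (⨂[k]^(a+b) V) →ₗ[k] M}
    (h : ∀ x y, F (mulPow k V a b (x ⊗ₜ y)) = G (mulPow k V a b (x ⊗ₜ y))) : F = G :=
  (LinearEquiv.eq_comp_toLinearMap_iff _ _).1 (TensorProduct.ext' h)

section Maps

variable {a b c a' b' c' : ℕ}

lemma tmap_mulPow (f : (⨂[k]^a V) →ₗ[k] ⨂[k]^a' V) (g : (⨂[k]^b V) →ₗ[k] ⨂[k]^b' V)
    (x : ⨂[k]^a V) (y : ⨂[k]^b V) :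
    tmap f g (mulPow k V a b (x ⊗ₜ y)) = mulPow k V a' b' (f x ⊗ₜ g y) := by
  simp [tmap]

lemma conv_refl (h1 : a = a) (h2 : b = b) (f : (⨂[k]^a V) →ₗ[k] ⨂[k]^b V) :
    conv h1 h2 f = f := by
  ext x; simp [conv]

lemma conv_apply (h1 : a = a') (h2 : b = b') (f : (⨂[k]^a V) →ₗ[k] ⨂[k]^b V) (x : ⨂[k]^a' V) :
    conv h1 h2 f x = TensorPower.cast k V h2 (f (TensorPower.cast k V h1.symm x)) :=
  rfl

lemma conv_conv (h1 : a = a') (h2 : b = b') (g1 : a' = c) (g2 : b' = c')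
    (f : (⨂[k]^a V) →ₗ[k] ⨂[k]^b V) :
    conv g1 g2 (conv h1 h2 f) = conv (h1.trans g1) (h2.trans g2) f := by
  subst g1 g2 h1 h2; simp only [conv_refl]

lemma conv_add (h1 : a = a') (h2 : b = b') (f g : (⨂[k]^a V) →ₗ[k] ⨂[k]^b V) :
    conv h1 h2 (f + g) = conv h1 h2 f + conv h1 h2 g := by
  subst h1 h2; simp only [conv_refl]

lemma conv_smul (h1 : a = a') (h2 : b = b') (r : k) (f : (⨂[k]^a V) →ₗ[k] ⨂[k]^b V) :
    conv h1 h2 (r • f) = r • conv h1 h2 f := by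
  subst h1 h2; simp only [conv_refl]

lemma tmap_conv_left (h1 : a = a') (h2 : c = c') (f : (⨂[k]^a V) →ₗ[k] ⨂[k]^c V)
    (g : (⨂[k]^b V) →ₗ[k] ⨂[k]^b' V) :
    tmap (conv h1 h2 f) g = conv (by rw [h1]) (by rw [h2]) (tmap f g) := by
  subst h1 h2; simp only [conv_refl]

lemma tmap_conv_right (h1 : b = b') (h2 : c = c') (f : (⨂[k]^a V) →ₗ[k] ⨂[k]^a' V)
    (g : (⨂[k]^b V) →ₗ[k] ⨂[k]^c V) :
    tmap f (conv h1 h2 g) = conv (by rw [h1]) (by rw [h2]) (tmap f g) := by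
  subst h1 h2; simp only [conv_refl]

lemma tmap_add_left (f f' : (⨂[k]^a V) →ₗ[k] ⨂[k]^a' V) (g : (⨂[k]^b V) →ₗ[k] ⨂[k]^b' V) :
    tmap (f + f') g = tmap f g + tmap f' g := by
  simp [tmap, TensorProduct.map_add_left, LinearMap.add_comp, LinearMap.comp_add]

lemma tmap_add_right (f : (⨂[k]^a V) →ₗ[k] ⨂[k]^a' V) (g g' : (⨂[k]^b V) →ₗ[k] ⨂[k]^b' V) :
    tmap f (g + g') = tmap f g + tmap f g' := by
  simp [tmap, TensorProduct.map_add_right, LinearMap.add_comp, LinearMap.comp_add]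

lemma tmap_smul_left (r : k) (f : (⨂[k]^a V) →ₗ[k] ⨂[k]^a' V)
    (g : (⨂[k]^b V) →ₗ[k] ⨂[k]^b' V) :
    tmap (r • f) g = r • tmap f g := by
  simp [tmap, TensorProduct.map_smul_left, LinearMap.smul_comp, LinearMap.comp_smul]

lemma tmap_smul_right (r : k) (f : (⨂[k]^a V) →ₗ[k] ⨂[k]^a' V)
    (g : (⨂[k]^b V) →ₗ[k] ⨂[k]^b' V) :
    tmap f (r • g) = r • tmap f g := by
  simp [tmap, TensorProduct.map_smul_right, LinearMap.smul_comp, LinearMap.comp_smul]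

lemma tmap_assoc (f : (⨂[k]^a V) →ₗ[k] ⨂[k]^a' V) (g : (⨂[k]^b V) →ₗ[k] ⨂[k]^b' V)
    (h : (⨂[k]^c V) →ₗ[k] ⨂[k]^c' V) :
    conv (Nat.add_assoc a b c) (Nat.add_assoc a' b' c') (tmap (tmap f g) h)
      = tmap f (tmap g h) := by
  refine ext_mulPow fun x w => ?_
  obtain ⟨u, rfl⟩ := (mulPow k V b c).surjective w
  induction u using TensorProduct.induction_on with
  | zero => simp
  | tmul y z =>
    have hxyz := congrArg (TensorPower.cast k V (Nat.add_assoc a b c).symm) (mulPow_assoc x y z)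
    rw [TensorPower.cast_cast, TensorPower.cast_refl, LinearEquiv.refl_apply] at hxyz
    rw [conv_apply, ← hxyz, tmap_mulPow, tmap_mulPow, tmap_mulPow, tmap_mulPow, mulPow_assoc]
  | add u v hu hv => simp only [map_add, TensorProduct.tmul_add, hu, hv]

end Maps

lemma mulPow_zero_left {b : ℕ} (v : Fin 0 → V) (y : ⨂[k]^b V) :
    mulPow k V 0 b (tprod k v ⊗ₜ y) = TensorPower.cast k V (Nat.zero_add b).symm y := by
  have hv : v = Fin.elim0 := Subsingleton.elim _ _
  have h := congrArg (TensorPower.cast k V (Nat.zero_add b).symm) (TensorPower.one_mul (R := k) y)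
  rw [TensorPower.cast_cast, TensorPower.cast_refl] at h
  rw [hv, ← h]
  rfl

lemma pmap_tprod (f : V →ₗ[k] V) {n : ℕ} (v : Fin n → V) :
    pmap f n (tprod k v) = tprod k (fun i => f (v i)) :=
  PiTensorProduct.map_tprod _ _

lemma pmap_add (f : V →ₗ[k] V) (a b : ℕ) :
    pmap f (a + b) = tmap (pmap f a) (pmap f b) := by
  refine ext_mulPow fun x y => ?_
  rw [tmap_mulPow]
  induction x using PiTensorProduct.induction_on with
  | smul_tprod r v =>
    induction y using PiTensorProduct.induction_on with
    | smul_tprod s w =>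
      simp only [TensorProduct.smul_tmul_smul, map_smul, pmap_tprod, mulPow_tprod]
      congr 2
      funext i
      induction i using Fin.addCases <;> simp
    | add y y' hy hy' => simp only [TensorProduct.tmul_add, map_add, hy, hy']
  | add x x' hx hx' => simp only [TensorProduct.add_tmul, map_add, hx, hx']

lemma conv_pmap {n m : ℕ} (h : n = m) (f : V →ₗ[k] V) : conv h h (pmap f n) = pmap f m := by
  subst h; exact conv_refl _ _ _

lemma tmap_pmap_zero {b c : ℕ} (f : V →ₗ[k] V) (g : (⨂[k]^b V) →ₗ[k] ⨂[k]^c V) :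
    tmap (pmap f 0) g = conv (Nat.zero_add b).symm (Nat.zero_add c).symm g := by
  refine ext_mulPow fun x y => ?_
  induction x using PiTensorProduct.induction_on with
  | smul_tprod r v =>
    rw [← TensorProduct.smul_tmul', map_smul, map_smul, tmap_mulPow, pmap_tprod, mulPow_zero_left,
      mulPow_zero_left, conv_apply]
    simp only [map_smul, TensorPower.cast_cast, TensorPower.cast_refl, LinearEquiv.refl_apply]
  | add x x' hx hx' => simp only [TensorProduct.add_tmul, map_add, hx, hx']

section Padding

variable (σ : V →ₗ[k] V)

noncomputable def tensorLeft {a b : ℕ} :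
    ((⨂[k]^a V) →ₗ[k] ⨂[k]^b V) →ₗ[k] (⨂[k]^(a+1) V) →ₗ[k] ⨂[k]^(b+1) V where
  toFun f := conv (Nat.add_comm 1 a) (Nat.add_comm 1 b) (tmap (pmap σ 1) f)
  map_add' f g := by rw [tmap_add_right, conv_add]
  map_smul' r f := by rw [tmap_smul_right, conv_smul]; rfl

lemma tensorLeft_apply {a b : ℕ} (f : (⨂[k]^a V) →ₗ[k] ⨂[k]^b V) :
    tensorLeft σ f = conv (Nat.add_comm 1 a) (Nat.add_comm 1 b) (tmap (pmap σ 1) f) :=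
  rfl

noncomputable def padRight {i : ℕ} (d : ℕ) :
    ((⨂[k]^i V) →ₗ[k] ⨂[k]^(i+1) V) →ₗ[k] (⨂[k]^d V) →ₗ[k] ⨂[k]^(d+1) V :=
  if h : i ≤ d then
    { toFun f := conv (by omega) (by omega) (tmap f (pmap LinearMap.id (d - i)))
      map_add' f g := by rw [tmap_add_left, conv_add]
      map_smul' r f := by rw [tmap_smul_left, conv_smul]; rfl }
  else 0

lemma padRight_apply {i m d : ℕ} (h : i + m = d) (f : (⨂[k]^i V) →ₗ[k] ⨂[k]^(i+1) V) :
    padRight d f = conv (by omega) (by omega) (tmap f (pmap LinearMap.id m)) := by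
  obtain rfl : m = d - i := by omega
  rw [padRight, dif_pos (by omega)]
  rfl

noncomputable def padSigma {i : ℕ} (f : (⨂[k]^i V) →ₗ[k] ⨂[k]^(i+1) V) (d : ℕ) :
    (⨂[k]^d V) →ₗ[k] ⨂[k]^(d+1) V :=
  if h : i + 1 ≤ d then
    conv (by omega) (by omega) (tmap (tmap (pmap σ (d - i - 1)) f) (pmap LinearMap.id 1))
  else 0

lemma padSigma_apply {p i d : ℕ} (h : p + i + 1 = d) (f : (⨂[k]^i V) →ₗ[k] ⨂[k]^(i+1) V) :
    padSigma σ f d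
      = conv (by omega) (by omega) (tmap (tmap (pmap σ p) f) (pmap LinearMap.id 1)) := by
  obtain rfl : p = d - i - 1 := by omega
  rw [padSigma, dif_pos (by omega)]

variable {i d : ℕ} (f : (⨂[k]^i V) →ₗ[k] ⨂[k]^(i+1) V)

lemma padSigma_succ (h : i + 1 ≤ d) : padSigma σ f (d+1) = tensorLeft σ (padSigma σ f d) := by
  obtain ⟨p, rfl⟩ : ∃ p, p + i + 1 = d := ⟨d - i - 1, by omega⟩
  rw [padSigma_apply σ (show p + 1 + i + 1 = _ by omega), padSigma_apply σ rfl, tensorLeft_apply,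
    tmap_conv_right, conv_conv, ← tmap_assoc (pmap σ 1) (tmap (pmap σ p) f) (pmap LinearMap.id 1),
    conv_conv, ← tmap_assoc (pmap σ 1) (pmap σ p) f, ← pmap_add, ← conv_pmap (Nat.add_comm 1 p)]
  simp only [tmap_conv_left, conv_conv]

lemma padSigma_self : padSigma σ f (i+1) = padRight (i+1) f := by
  rw [padSigma_apply σ (show 0 + i + 1 = _ by omega), padRight_apply rfl, tmap_pmap_zero,
    tmap_conv_left, conv_conv]

lemma tensorLeft_padRight (h : i ≤ d) :
    tensorLeft σ (padRight d f) = padRight (d+1) (tensorLeft σ f) := by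
  obtain ⟨m, rfl⟩ : ∃ m, i + m = d := ⟨d - i, by omega⟩
  rw [padRight_apply rfl, padRight_apply (show i + 1 + m = _ by omega), tensorLeft_apply,
    tensorLeft_apply, tmap_conv_right, conv_conv, ← tmap_assoc, tmap_conv_left, conv_conv,
    conv_conv]

lemma padRight_tmap_id (h : i + 1 ≤ d) :
    padRight d (tmap f (pmap LinearMap.id 1)) = padRight d f := by
  obtain ⟨m, rfl⟩ : ∃ m, i + 1 + m = d := ⟨d - i - 1, by omega⟩
  rw [padRight_apply rfl, padRight_apply (show i + (1 + m) = _ by omega), pmap_add,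
    ← tmap_assoc, conv_conv]

end Padding

lemma sum_padSigma_succ (σ : V →ₗ[k] V) (δ : (i : ℕ) → (⨂[k]^i V) →ₗ[k] ⨂[k]^(i+1) V)
    (c : ℕ → k) (n : ℕ) :
    ∑ j ∈ Finset.range (n+1), c j • padSigma σ (δ (j+1)) (n+1+1)
      = tensorLeft σ (∑ j ∈ Finset.range n, c j • padSigma σ (δ (j+1)) (n+1))
        + c n • padRight (n+1+1) (δ (n+1)) := by
  rw [Finset.sum_range_succ, padSigma_self, map_sum]
  congr 1
  refine Finset.sum_congr rfl fun j hj => ?_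
  rw [map_smul, padSigma_succ _ _ (by have := Finset.mem_range.1 hj; omega)]

namespace SeqPairRec

open Finset

variable {σ : V ≃ₗ[k] V} {δr δl : (i : ℕ) → (⨂[k]^i V) →ₗ[k] ⨂[k]^(i+1) V}

lemma neg_one_pow_smul_tensorLeft (hpair : SeqPairRec σ δr δl) {i : ℕ} (hi : 1 ≤ i) :
    (-1 : k)^i • tensorLeft σ.toLinearMap (δr i)
      = (-1 : k)^i • δr (i+1) - (δl (i+1) - tmap (δl i) (pmap LinearMap.id 1)) := by
  have hrec : δr (i+1) + (-1 : k)^(i+1) • δl (i+1)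
      = tensorLeft σ.toLinearMap (δr i)
        + (-1 : k)^(i+1) • conv rfl rfl (tmap (δl i) (pmap LinearMap.id 1)) :=
    hpair.2 (i+1) (by omega)
  rw [conv_refl, pow_succ] at hrec
  rcases neg_one_pow_eq_or k i with hs | hs <;> rw [hs] at hrec ⊢
  · linear_combination (norm := module) -hrec
  · linear_combination (norm := module) hrec

lemma neg_one_pow_smul_tensorLeft_padRight (hpair : SeqPairRec σ δr δl) {i d : ℕ} (hi : 1 ≤ i)
    (hid : i ≤ d) :
    (-1 : k)^i • tensorLeft σ.toLinearMap (padRight d (δr i))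
      = (-1 : k)^i • padRight (d+1) (δr (i+1))
        - (padRight (d+1) (δl (i+1)) - padRight (d+1) (δl i)) := by
  rw [tensorLeft_padRight _ _ hid, ← map_smul, hpair.neg_one_pow_smul_tensorLeft hi, map_sub,
    map_sub, map_smul, padRight_tmap_id _ (by omega)]

lemma tensorLeft_alternating_sum_padRight (hpair : SeqPairRec σ δr δl) (n : ℕ) :
    tensorLeft σ.toLinearMap (∑ j ∈ range n, (-1 : k)^(j+1) • padRight (n+1) (δr (j+1)))
      = ∑ j ∈ range n, (-1 : k)^(j+1) • padRight (n+1+1) (δr (j+1+1))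
        - (padRight (n+1+1) (δl (n+1)) - padRight (n+1+1) (δl 1)) := by
  rw [map_sum, ← sum_range_sub (fun j => padRight (n+1+1) (δl (j+1))), ← sum_sub_distrib]
  refine sum_congr rfl fun j hj => ?_
  rw [map_smul]
  exact hpair.neg_one_pow_smul_tensorLeft_padRight (by omega) (by have := mem_range.1 hj; omega)

lemma alternating_sum_padSigma (hpair : SeqPairRec σ δr δl) (n : ℕ) :
    ∑ j ∈ range n, (-1 : k)^(j+1+1) • padSigma σ.toLinearMap (δl (j+1)) (n+1)
      = (-1 : k)^(n+1+1) • ∑ j ∈ range n, (-1 : k)^(j+1) • padRight (n+1) (δr (j+1)) := by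
  induction n with
  | zero => simp
  | succ n ih =>
    have hsign : ∑ j ∈ range n, (-1 : k)^(j+1+1) • padRight (n+1+1) (δr (j+1+1))
        = -∑ j ∈ range n, (-1 : k)^(j+1) • padRight (n+1+1) (δr (j+1+1)) := by
      rw [← sum_neg_distrib]
      exact sum_congr rfl fun j _ => by module
    rw [sum_padSigma_succ, ih, map_smul, hpair.tensorLeft_alternating_sum_padRight,
      sum_range_succ', hsign, zero_add, ← hpair.1]
    module

end SeqPairRec

/-- **Proposition 2.4(b)**: if `(δ_{i,r}, δ_{i,l})` satisfies the sequence-pair recurrence for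
`σ`, then for every `d ≥ 2`,
`∑_{i=1}^{d−1} (−1)^{i+1} (σ^{⊗(d−i−1)} ⊗ δ_{i,l} ⊗ id_V) = (−1)^{d+1} ∑_{i=1}^{d−1} (−1)^i (δ_{i,r} ⊗ id_V^{⊗(d−i)})`
as linear maps `V^{⊗d} → V^{⊗(d+1)}`. -/
theorem prop_2_4_b (σ : V ≃ₗ[k] V)
    (δr δl : (i : ℕ) → (⨂[k]^i V) →ₗ[k] ⨂[k]^(i+1) V)
    (hpair : SeqPairRec σ δr δl)
    (d : ℕ) :
    (∑ i : Fin (d-1), ((-1 : k)^(((i : ℕ)+1)+1)) •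
        conv (a' := d) (b' := d+1) (by have := i.isLt; omega) (by have := i.isLt; omega)
          (tmap (tmap (pmap σ.toLinearMap (d - ((i : ℕ)+1) - 1)) (δl ((i : ℕ)+1)))
            (pmap (LinearMap.id) 1)))
    = ((-1 : k)^(d+1)) •
      ∑ i : Fin (d-1), ((-1 : k)^((i : ℕ)+1)) •
        conv (a' := d) (b' := d+1) (by have := i.isLt; omega) (by have := i.isLt; omega)
          (tmap (δr ((i : ℕ)+1)) (pmap (LinearMap.id) (d - ((i : ℕ)+1)))) := by
  have hL : ∀ i : Fin (d - 1),
      conv (a' := d) (b' := d+1) (by have := i.isLt; omega) (by have := i.isLt; omega)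
          (tmap (tmap (pmap σ.toLinearMap (d - ((i : ℕ)+1) - 1)) (δl ((i : ℕ)+1)))
            (pmap LinearMap.id 1))
        = padSigma σ.toLinearMap (δl ((i : ℕ)+1)) d := fun i =>
    (padSigma_apply _ (by have := i.isLt; omega) _).symm
  have hR : ∀ i : Fin (d - 1),
      conv (a' := d) (b' := d+1) (by have := i.isLt; omega) (by have := i.isLt; omega)
          (tmap (δr ((i : ℕ)+1)) (pmap LinearMap.id (d - ((i : ℕ)+1))))
        = padRight d (δr ((i : ℕ)+1)) := fun i =>
    (padRight_apply (by have := i.isLt; omega) _).symm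
  simp only [hL, hR]
  rw [Fin.sum_univ_eq_sum_range (fun j => (-1 : k)^(j+1+1) • padSigma σ.toLinearMap (δl (j+1)) d),
    Fin.sum_univ_eq_sum_range (fun j => (-1 : k)^(j+1) • padRight d (δr (j+1)))]
  obtain _ | n := d
  · simp
  · exact hpair.alternating_sum_padSigma n

end OrePaper
end

section
/- Suppose σ(x_1) = m_{11} x_1 + m_{12} x_2 and σ(x_2) = m_{21} x_1 + m_{22} x_2 with m_{11}m_{22} − m_{12}m_{21} ≠ 0, and let r = x_1⊗x_2 − x_2⊗x_1 ∈ V⊗V. Then D(r) ∈ r⊗V + V⊗r if and only if the following four equations hold: m_{21}γ_{11} + (1−m_{11})γ_{21} = 0; (1−m_{22})γ_{13} + m_{12}γ_{23} = 0; (m_{22}−1)γ_{11} + m_{21}γ_{12} − m_{12}γ_{21} + (1−m_{11})γ_{22} = 0; (m_{22}−1)γ_{12} + m_{21}γ_{13} − m_{12}γ_{22} + (1−m_{11})γ_{23} = 0. In that case, D(r) = r⊗δ_r + δ_l⊗r with δ_r = (m_{22}γ_{11} − m_{12}γ_{21} + γ_{22}) x_1 + (m_{11}γ_{23} − m_{21}γ_{13})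 x_2 and δ_l = γ_{11} x_1 + (m_{22}γ_{12} − m_{12}γ_{22} + γ_{23}) x_2. -/
open scoped TensorProduct

/-! Since `A` is commutative, `r ⊗ V + V ⊗ r` is killed by the multiplication map `V^{⊗3} → A₃`,
whose coordinates are the sums of the coordinates of a tensor over the index triples with a fixed
number of `x₂`'s. On `D(r)` these four sums are, up to sign, the four equations. Conversely, under
the equations the decomposition `D(r) = r ⊗ δ_r + δ_l ⊗ r` is verified coefficient by coefficient. -/

namespace OrePaper

section

variable {R V : Type*} [CommRing R] [AddCommGroup V] [Module R V]

def idealDegThree (r : V ⊗[R] V) : Submodule R (V ⊗[R] (V ⊗[R] V)) :=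
  LinearMap.range ((TensorProduct.assoc R V V V).toLinearMap ∘ₗ TensorProduct.mk R (V ⊗[R] V) V r)
    ⊔ LinearMap.range ((TensorProduct.mk R V (V ⊗[R] V)).flip r)

theorem assoc_tmul_add_tmul_mem_idealDegThree (r : V ⊗[R] V) (c c' : V) :
    TensorProduct.assoc R V V V (r ⊗ₜ c) + c' ⊗ₜ r ∈ idealDegThree r :=
  Submodule.add_mem_sup ⟨c, rfl⟩ ⟨c', rfl⟩

noncomputable def twistedDerivation (σ : V →ₗ[R] V) (δ : V →ₗ[R] V ⊗[R] V) :
    V ⊗[R] V →ₗ[R] V ⊗[R] (V ⊗[R] V) :=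
  TensorProduct.map σ δ
    + (TensorProduct.assoc R V V V).toLinearMap ∘ₗ TensorProduct.map δ LinearMap.id

noncomputable abbrev cubeBasis {ι : Type*} (b : Module.Basis ι R V) :
    Module.Basis (ι × ι × ι) R (V ⊗[R] (V ⊗[R] V)) :=
  b.tensorProduct (b.tensorProduct b)

theorem cubeBasis_repr_sums_eq_zero_of_mem_idealDegThree (b : Module.Basis (Fin 2) R V)
    {t : V ⊗[R] (V ⊗[R] V)}
    (ht : t ∈ idealDegThree (b 0 ⊗ₜ[R] b 1 - b 1 ⊗ₜ[R] b 0)) :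
    (cubeBasis b).repr t (0, 0, 0) = 0 ∧
    (cubeBasis b).repr t (0, 0, 1) + (cubeBasis b).repr t (0, 1, 0)
      + (cubeBasis b).repr t (1, 0, 0) = 0 ∧
    (cubeBasis b).repr t (0, 1, 1) + (cubeBasis b).repr t (1, 0, 1)
      + (cubeBasis b).repr t (1, 1, 0) = 0 ∧
    (cubeBasis b).repr t (1, 1, 1) = 0 := by
  obtain ⟨_, ⟨c, rfl⟩, _, ⟨c', rfl⟩, rfl⟩ := Submodule.mem_sup.mp ht
  simp [Module.Basis.tensorProduct_repr_tmul_apply]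

section

variable (b : Module.Basis (Fin 2) R V) {σ : V →ₗ[R] V} {δ : V →ₗ[R] V ⊗[R] V}
  {m11 m12 m21 m22 γ11 γ12 γ13 γ21 γ22 γ23 : R}
  (hσ1 : σ (b 0) = m11 • b 0 + m12 • b 1) (hσ2 : σ (b 1) = m21 • b 0 + m22 • b 1)
  (hδ1 : δ (b 0) = γ11 • (b 0 ⊗ₜ[R] b 0) + γ12 • (b 1 ⊗ₜ[R] b 0) + γ13 • (b 1 ⊗ₜ[R] b 1))
  (hδ2 : δ (b 1) = γ21 • (b 0 ⊗ₜ[R] b 0) + γ22 • (b 1 ⊗ₜ[R] b 0) + γ23 • (b 1 ⊗ₜ[R] b 1))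
include hσ1 hσ2 hδ1 hδ2

theorem twistedDerivation_commutator_eq :
    twistedDerivation σ δ (b 0 ⊗ₜ[R] b 1 - b 1 ⊗ₜ[R] b 0) =
      (m11 * γ21 - m21 * γ11 - γ21) • (b 0 ⊗ₜ[R] (b 0 ⊗ₜ[R] b 0))
        + γ11 • (b 0 ⊗ₜ[R] (b 0 ⊗ₜ[R] b 1))
        + (m11 * γ22 - m21 * γ12) • (b 0 ⊗ₜ[R] (b 1 ⊗ₜ[R] b 0))
        + (m11 * γ23 - m21 * γ13) • (b 0 ⊗ₜ[R] (b 1 ⊗ₜ[R] b 1))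
        + (m12 * γ21 - m22 * γ11 - γ22) • (b 1 ⊗ₜ[R] (b 0 ⊗ₜ[R] b 0))
        + γ12 • (b 1 ⊗ₜ[R] (b 0 ⊗ₜ[R] b 1))
        + (m12 * γ22 - m22 * γ12 - γ23) • (b 1 ⊗ₜ[R] (b 1 ⊗ₜ[R] b 0))
        + (m12 * γ23 - m22 * γ13 + γ13) • (b 1 ⊗ₜ[R] (b 1 ⊗ₜ[R] b 1)) := by
  simp only [twistedDerivation, LinearMap.add_apply, LinearMap.coe_comp, Function.comp_apply,
    LinearEquiv.coe_coe, map_sub, TensorProduct.map_tmul, hσ1, hσ2, hδ1, hδ2,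
    LinearMap.id_coe, id_eq, map_add, map_smul,
    TensorProduct.add_tmul, ← TensorProduct.smul_tmul', TensorProduct.tmul_add,
    TensorProduct.tmul_smul, TensorProduct.assoc_tmul]
  module

theorem twistedDerivation_commutator_eq_assoc_tmul_add_tmul
    (e1 : m21 * γ11 + (1 - m11) * γ21 = 0)
    (e2 : (1 - m22) * γ13 + m12 * γ23 = 0)
    (e3 : (m22 - 1) * γ11 + m21 * γ12 - m12 * γ21 + (1 - m11) * γ22 = 0)
    (e4 : (m22 - 1) * γ12 + m21 * γ13 - m12 * γ22 + (1 - m11) * γ23 = 0) :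
    twistedDerivation σ δ (b 0 ⊗ₜ[R] b 1 - b 1 ⊗ₜ[R] b 0) =
      TensorProduct.assoc R V V V ((b 0 ⊗ₜ[R] b 1 - b 1 ⊗ₜ[R] b 0) ⊗ₜ[R]
          ((m22 * γ11 - m12 * γ21 + γ22) • b 0 + (m11 * γ23 - m21 * γ13) • b 1))
        + (γ11 • b 0 + (m22 * γ12 - m12 * γ22 + γ23) • b 1) ⊗ₜ[R]
          (b 0 ⊗ₜ[R] b 1 - b 1 ⊗ₜ[R] b 0) := by
  rw [twistedDerivation_commutator_eq b hσ1 hσ2 hδ1 hδ2]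
  simp only [TensorProduct.tmul_add, TensorProduct.tmul_sub, TensorProduct.tmul_smul,
    TensorProduct.add_tmul, TensorProduct.sub_tmul, ← TensorProduct.smul_tmul',
    map_add, map_sub, map_smul, TensorProduct.assoc_tmul]
  match_scalars
  · linear_combination -e1
  · ring
  · linear_combination -e3
  · ring
  · ring
  · linear_combination -e4
  · ring
  · linear_combination e2

end

end

theorem lemma_4_5_general {k : Type*} [Field k]
    {V : Type*} [AddCommGroup V] [Module k V]
    (b : Module.Basis (Fin 2) k V)
    (σ : V →ₗ[k] V) (δ : V →ₗ[k] V ⊗[k] V)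
    (m11 m12 m21 m22 : k) (γ11 γ12 γ13 γ21 γ22 γ23 : k)
    (hσ1 : σ (b 0) = m11 • b 0 + m12 • b 1)
    (hσ2 : σ (b 1) = m21 • b 0 + m22 • b 1)
    (hδ1 : δ (b 0) = γ11 • (b 0 ⊗ₜ[k] b 0) + γ12 • (b 1 ⊗ₜ[k] b 0) + γ13 • (b 1 ⊗ₜ[k] b 1))
    (hδ2 : δ (b 1) = γ21 • (b 0 ⊗ₜ[k] b 0) + γ22 • (b 1 ⊗ₜ[k] b 0) + γ23 • (b 1 ⊗ₜ[k] b 1))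
    (D : V ⊗[k] V →ₗ[k] V ⊗[k] (V ⊗[k] V))
    (hD : D = TensorProduct.map σ δ
        + (TensorProduct.assoc k V V V).toLinearMap ∘ₗ TensorProduct.map δ LinearMap.id)
    (r : V ⊗[k] V) (hr : r = b 0 ⊗ₜ[k] b 1 - b 1 ⊗ₜ[k] b 0) :
    (D r ∈ LinearMap.range
          ((TensorProduct.assoc k V V V).toLinearMap ∘ₗ TensorProduct.mk k (V ⊗[k] V) V r)
        ⊔ LinearMap.range ((TensorProduct.mk k V (V ⊗[k] V)).flip r)
      ↔ (m21 * γ11 + (1 - m11) * γ21 = 0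
        ∧ (1 - m22) * γ13 + m12 * γ23 = 0
        ∧ (m22 - 1) * γ11 + m21 * γ12 - m12 * γ21 + (1 - m11) * γ22 = 0
        ∧ (m22 - 1) * γ12 + m21 * γ13 - m12 * γ22 + (1 - m11) * γ23 = 0))
    ∧ ((m21 * γ11 + (1 - m11) * γ21 = 0
        ∧ (1 - m22) * γ13 + m12 * γ23 = 0
        ∧ (m22 - 1) * γ11 + m21 * γ12 - m12 * γ21 + (1 - m11) * γ22 = 0
        ∧ (m22 - 1) * γ12 + m21 * γ13 - m12 * γ22 + (1 - m11) * γ23 = 0) →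
        D r = (TensorProduct.assoc k V V V) (r ⊗ₜ[k] ((m22 * γ11 - m12 * γ21 + γ22) • b 0 + (m11 * γ23 - m21 * γ13) • b 1))
            + (γ11 • b 0 + (m22 * γ12 - m12 * γ22 + γ23) • b 1) ⊗ₜ[k] r) := by
  obtain rfl : D = twistedDerivation σ δ := hD
  subst hr
  have hDr := twistedDerivation_commutator_eq b hσ1 hσ2 hδ1 hδ2
  have hdecomp := fun (h : _ ∧ _ ∧ _ ∧ _) =>
    twistedDerivation_commutator_eq_assoc_tmul_add_tmul b hσ1 hσ2 hδ1 hδ2 h.1 h.2.1 h.2.2.1 h.2.2.2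
  refine ⟨⟨fun h => ?_, fun he => hdecomp he ▸ assoc_tmul_add_tmul_mem_idealDegThree _ _ _⟩, hdecomp⟩
  obtain ⟨h000, h001, h011, h111⟩ := cubeBasis_repr_sums_eq_zero_of_mem_idealDegThree b h
  simp only [Fin.isValue, hDr, map_add, map_smul, Finsupp.coe_add, Finsupp.coe_smul, Pi.add_apply,
    Pi.smul_apply, Module.Basis.tensorProduct_repr_tmul_apply, Module.Basis.repr_self,
    Finsupp.single_eq_same, smul_eq_mul, mul_one, ne_eq, zero_ne_one, not_false_eq_true,
    Finsupp.single_eq_of_ne, mul_zero, add_zero, one_ne_zero, zero_add] at h000 h001 h011 h111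
  exact ⟨by linear_combination -h000, by linear_combination h111,
    by linear_combination -h001, by linear_combination -h011⟩

/-- **Lemma 4.5** (commutative polynomial case): for `A = k[x₁,x₂]` with relation `r = x₁⊗x₂ − x₂⊗x₁`, the condition `D(r) = (σ⊗δ + δ⊗id)(r) ∈ r⊗V + V⊗r` is equivalent to the four listed equations, in which case `D(r) = r⊗δ_r + δ_l⊗r` with the indicated `δ_r, δ_l`. -/
theorem lemma_4_5 {k : Type*} [Field k] [CharZero k]
    {V : Type*} [AddCommGroup V] [Module k V]
    (b : Module.Basis (Fin 2) k V)
    (σ : V →ₗ[k] V) (δ : V →ₗ[k] V ⊗[k] V)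
    (m11 m12 m21 m22 : k) (γ11 γ12 γ13 γ21 γ22 γ23 : k)
    (hσ1 : σ (b 0) = m11 • b 0 + m12 • b 1)
    (hσ2 : σ (b 1) = m21 • b 0 + m22 • b 1)
    (hdet : m11 * m22 - m12 * m21 ≠ 0)
    (hδ1 : δ (b 0) = γ11 • (b 0 ⊗ₜ[k] b 0) + γ12 • (b 1 ⊗ₜ[k] b 0) + γ13 • (b 1 ⊗ₜ[k] b 1))
    (hδ2 : δ (b 1) = γ21 • (b 0 ⊗ₜ[k] b 0) + γ22 • (b 1 ⊗ₜ[k] b 0) + γ23 • (b 1 ⊗ₜ[k] b 1))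
    (D : V ⊗[k] V →ₗ[k] V ⊗[k] (V ⊗[k] V))
    (hD : D = TensorProduct.map σ δ
        + (TensorProduct.assoc k V V V).toLinearMap ∘ₗ TensorProduct.map δ LinearMap.id)
    (r : V ⊗[k] V) (hr : r = b 0 ⊗ₜ[k] b 1 - b 1 ⊗ₜ[k] b 0) :
    (D r ∈ LinearMap.range
          ((TensorProduct.assoc k V V V).toLinearMap ∘ₗ TensorProduct.mk k (V ⊗[k] V) V r)
        ⊔ LinearMap.range ((TensorProduct.mk k V (V ⊗[k] V)).flip r)
      ↔ (m21 * γ11 + (1 - m11) * γ21 = 0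
        ∧ (1 - m22) * γ13 + m12 * γ23 = 0
        ∧ (m22 - 1) * γ11 + m21 * γ12 - m12 * γ21 + (1 - m11) * γ22 = 0
        ∧ (m22 - 1) * γ12 + m21 * γ13 - m12 * γ22 + (1 - m11) * γ23 = 0))
    ∧ ((m21 * γ11 + (1 - m11) * γ21 = 0
        ∧ (1 - m22) * γ13 + m12 * γ23 = 0
        ∧ (m22 - 1) * γ11 + m21 * γ12 - m12 * γ21 + (1 - m11) * γ22 = 0
        ∧ (m22 - 1) * γ12 + m21 * γ13 - m12 * γ22 + (1 - m11) * γ23 = 0) →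
        D r = (TensorProduct.assoc k V V V) (r ⊗ₜ[k] ((m22 * γ11 - m12 * γ21 + γ22) • b 0 + (m11 * γ23 - m21 * γ13) • b 1))
            + (γ11 • b 0 + (m22 * γ12 - m12 * γ22 + γ23) • b 1) ⊗ₜ[k] r) :=
  lemma_4_5_general b σ δ m11 m12 m21 m22 γ11 γ12 γ13 γ21 γ22 γ23 hσ1 hσ2 hδ1 hδ2 D hD r hr

end OrePaper
end

section
/- Suppose σ(x_1) = m_{11} x_1 and σ(x_2) = m_{22} x_2 with m_{11}m_{22} ≠ 0, and let r = x_1⊗x_2 + x_2⊗x_1 ∈ V⊗V. Then D(r) ∈ r⊗V + V⊗r if and only if the following four equations hold: (m_{11}+1)γ_{21} = 0; (m_{22}+1)γ_{13} = 0; (m_{22}+1)γ_{11} + (1−m_{11})γ_{22} = 0; (m_{22}−1)γ_{12} + (m_{11}+1)γ_{23} = 0. In that case, D(r) = r⊗δ_r + δ_l⊗r with δ_r = (m_{22}γ_{11} + γ_{22}) x_1 + m_{11}γ_{23} x_2 and δ_l = γ_{11} x_1 + (m_{22}γ_{12} + γ_{23}) x_2. -/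
/-!
In the basis `x_i ⊗ x_j ⊗ x_l` of `V^{⊗3}`, both `D(r)` and `r ⊗ c + c' ⊗ r` have eight
coordinates, the latter linear in the four coordinates of `c` and `c'` and vanishing at
`x₁x₁x₁` and `x₂x₂x₂`. Matching them, those two corner coordinates of `D(r)` give the first
two conditions, and eliminating `c, c'` from the remaining six equations leaves the other two.
Conversely, under the four conditions `c = δ_r`, `c' = δ_l` solve all eight equations.
-/

open TensorProduct

section TripleTensor

variable {R M : Type*} [CommSemiring R] [AddCommMonoid M] [Module R M]

theorem mem_range_assoc_mk_sup_range_flip_mk_iff (r : M ⊗[R] M) (x : M ⊗[R] (M ⊗[R] M)) :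
    x ∈ LinearMap.range ((TensorProduct.assoc R M M M).toLinearMap ∘ₗ mk R (M ⊗[R] M) M r)
        ⊔ LinearMap.range ((mk R M (M ⊗[R] M)).flip r)
      ↔ ∃ c c' : M, TensorProduct.assoc R M M M (r ⊗ₜ c) + c' ⊗ₜ r = x := by
  simp only [Submodule.mem_sup, LinearMap.mem_range, LinearMap.coe_comp,
    Function.comp_apply, mk_apply, LinearMap.flip_apply]
  constructor
  · rintro ⟨_, ⟨c, rfl⟩, _, ⟨c', rfl⟩, rfl⟩
    exact ⟨c, c', rfl⟩
  · rintro ⟨c, c', rfl⟩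
    exact ⟨_, ⟨c, rfl⟩, _, ⟨c', rfl⟩, rfl⟩

theorem Module.Basis.sum_smul_tmul_tmul_inj {ι : Type*} [Fintype ι] (b : Module.Basis ι R M)
    {a a' : ι → ι → ι → R} :
    ∑ i, ∑ j, ∑ l, a i j l • b i ⊗ₜ[R] (b j ⊗ₜ[R] b l)
        = ∑ i, ∑ j, ∑ l, a' i j l • b i ⊗ₜ[R] (b j ⊗ₜ[R] b l) ↔ a = a' := by
  have expand (a : ι → ι → ι → R) : ∑ i, ∑ j, ∑ l, a i j l • b i ⊗ₜ[R] (b j ⊗ₜ[R] b l)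
      = (b.tensorProduct (b.tensorProduct b)).equivFun.symm (fun p => a p.1 p.2.1 p.2.2) := by
    simp [Module.Basis.equivFun_symm_apply, Fintype.sum_prod_type,
      Module.Basis.tensorProduct_apply]
  rw [expand, expand, (LinearEquiv.injective _).eq_iff]
  refine ⟨fun h => ?_, fun h => h ▸ rfl⟩
  funext i j l
  exact congrFun h (i, j, l)

end TripleTensor

section QuantumPlane

variable {k V : Type*} [CommRing k] [AddCommGroup V] [Module k V]

def twistedDerivTensorSq (σ : V →ₗ[k] V) (δ : V →ₗ[k] V ⊗[k] V) :
    V ⊗[k] V →ₗ[k] V ⊗[k] (V ⊗[k] V) :=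
  TensorProduct.map σ δ
    + (TensorProduct.assoc k V V V).toLinearMap ∘ₗ TensorProduct.map δ LinearMap.id

variable (m11 m22 γ11 γ12 γ13 γ21 γ22 γ23 : k)

/-- Entry `(i, j, l)` is the coefficient of `x_{i+1} ⊗ x_{j+1} ⊗ x_{l+1}`. -/
def derivAnticommCoeff : Fin 2 → Fin 2 → Fin 2 → k :=
  ![![![(m11 + 1) * γ21, γ11], ![m11 * γ22, m11 * γ23]],
    ![![m22 * γ11 + γ22, γ12], ![m22 * γ12 + γ23, (m22 + 1) * γ13]]]

def anticommSumCoeff (c1 c2 d1 d2 : k) : Fin 2 → Fin 2 → Fin 2 → k :=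
  ![![![0, d1], ![c1 + d1, c2]], ![![c1, c2 + d2], ![d2, 0]]]

def DiagCompatible : Prop :=
  (m11 + 1) * γ21 = 0
    ∧ (m22 + 1) * γ13 = 0
    ∧ (m22 + 1) * γ11 + (1 - m11) * γ22 = 0
    ∧ (m22 - 1) * γ12 + (m11 + 1) * γ23 = 0

variable {m11 m22 γ11 γ12 γ13 γ21 γ22 γ23}

theorem twistedDerivTensorSq_anticomm {σ : V →ₗ[k] V} {δ : V →ₗ[k] V ⊗[k] V}
    (v : Fin 2 → V) (hσ1 : σ (v 0) = m11 • v 0) (hσ2 : σ (v 1) = m22 • v 1)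
    (hδ1 : δ (v 0) = γ11 • v 0 ⊗ₜ[k] v 0 + γ12 • v 1 ⊗ₜ[k] v 0 + γ13 • v 1 ⊗ₜ[k] v 1)
    (hδ2 : δ (v 1) = γ21 • v 0 ⊗ₜ[k] v 0 + γ22 • v 1 ⊗ₜ[k] v 0 + γ23 • v 1 ⊗ₜ[k] v 1) :
    twistedDerivTensorSq σ δ (v 0 ⊗ₜ[k] v 1 + v 1 ⊗ₜ[k] v 0)
      = ∑ i, ∑ j, ∑ l, derivAnticommCoeff m11 m22 γ11 γ12 γ13 γ21 γ22 γ23 i j l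
          • v i ⊗ₜ[k] (v j ⊗ₜ[k] v l) := by
  simp only [twistedDerivTensorSq, derivAnticommCoeff, Fin.sum_univ_two, map_add,
    LinearMap.add_apply, LinearMap.coe_comp, LinearEquiv.coe_coe, Function.comp_apply, map_tmul,
    LinearMap.id_coe, id_eq, hσ1, hσ2, hδ1, hδ2, tmul_add, add_tmul, ← smul_tmul', tmul_smul,
    map_smul, assoc_tmul, Matrix.cons_val_zero, Matrix.cons_val_one, Matrix.cons_val_fin_one]
  module

theorem assoc_anticomm_tmul_add_tmul_anticomm (v : Fin 2 → V) (c1 c2 d1 d2 : k) :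
    TensorProduct.assoc k V V V ((v 0 ⊗ₜ[k] v 1 + v 1 ⊗ₜ[k] v 0) ⊗ₜ[k] (c1 • v 0 + c2 • v 1))
        + (d1 • v 0 + d2 • v 1) ⊗ₜ[k] (v 0 ⊗ₜ[k] v 1 + v 1 ⊗ₜ[k] v 0)
      = ∑ i, ∑ j, ∑ l, anticommSumCoeff c1 c2 d1 d2 i j l • v i ⊗ₜ[k] (v j ⊗ₜ[k] v l) := by
  simp only [anticommSumCoeff, Fin.sum_univ_two, tmul_add, add_tmul, ← smul_tmul', tmul_smul,
    map_smul, map_add, assoc_tmul, Matrix.cons_val_zero, Matrix.cons_val_one,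
    Matrix.cons_val_fin_one]
  module

theorem diagCompatible_of_anticommSumCoeff_eq {c1 c2 d1 d2 : k}
    (h : anticommSumCoeff c1 c2 d1 d2 = derivAnticommCoeff m11 m22 γ11 γ12 γ13 γ21 γ22 γ23) :
    DiagCompatible m11 m22 γ11 γ12 γ13 γ21 γ22 γ23 := by
  simp only [anticommSumCoeff, derivAnticommCoeff, funext_iff, Fin.forall_fin_two,
    Matrix.cons_val_zero, Matrix.cons_val_one, Matrix.cons_val_fin_one] at h
  obtain ⟨⟨⟨h000, h001⟩, h010, h011⟩, ⟨h100, h101⟩, h110, h111⟩ := h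
  exact ⟨h000.symm, h111.symm, by linear_combination h010 - h100 - h001,
    by linear_combination h101 - h011 - h110⟩

theorem anticommSumCoeff_eq_derivAnticommCoeff
    (h : DiagCompatible m11 m22 γ11 γ12 γ13 γ21 γ22 γ23) :
    anticommSumCoeff (m22 * γ11 + γ22) (m11 * γ23) γ11 (m22 * γ12 + γ23)
      = derivAnticommCoeff m11 m22 γ11 γ12 γ13 γ21 γ22 γ23 := by
  obtain ⟨h1, h2, h3, h4⟩ := h
  simp only [anticommSumCoeff, derivAnticommCoeff, funext_iff, Fin.forall_fin_two,
    Matrix.cons_val_zero, Matrix.cons_val_one, Matrix.cons_val_fin_one, and_true, true_and]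
  exact ⟨⟨h1.symm, by linear_combination h3⟩, by linear_combination h4, h2.symm⟩

end QuantumPlane

namespace OrePaper

theorem lemma_quantum_plane_diag_general {k : Type*} [Field k]
    {V : Type*} [AddCommGroup V] [Module k V]
    (b : Module.Basis (Fin 2) k V)
    (σ : V →ₗ[k] V) (δ : V →ₗ[k] V ⊗[k] V)
    (m11 m22 : k) (γ11 γ12 γ13 γ21 γ22 γ23 : k)
    (hσ1 : σ (b 0) = m11 • b 0)
    (hσ2 : σ (b 1) = m22 • b 1)
    (hδ1 : δ (b 0) = γ11 • (b 0 ⊗ₜ[k] b 0) + γ12 • (b 1 ⊗ₜ[k] b 0) + γ13 • (b 1 ⊗ₜ[k] b 1))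
    (hδ2 : δ (b 1) = γ21 • (b 0 ⊗ₜ[k] b 0) + γ22 • (b 1 ⊗ₜ[k] b 0) + γ23 • (b 1 ⊗ₜ[k] b 1))
    (D : V ⊗[k] V →ₗ[k] V ⊗[k] (V ⊗[k] V))
    (hD : D = TensorProduct.map σ δ
        + (TensorProduct.assoc k V V V).toLinearMap ∘ₗ TensorProduct.map δ LinearMap.id)
    (r : V ⊗[k] V) (hr : r = b 0 ⊗ₜ[k] b 1 + b 1 ⊗ₜ[k] b 0) :
    (D r ∈ LinearMap.range
          ((TensorProduct.assoc k V V V).toLinearMap ∘ₗ TensorProduct.mk k (V ⊗[k] V) V r)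
        ⊔ LinearMap.range ((TensorProduct.mk k V (V ⊗[k] V)).flip r)
      ↔ ((m11 + 1) * γ21 = 0
        ∧ (m22 + 1) * γ13 = 0
        ∧ (m22 + 1) * γ11 + (1 - m11) * γ22 = 0
        ∧ (m22 - 1) * γ12 + (m11 + 1) * γ23 = 0))
    ∧ (((m11 + 1) * γ21 = 0
        ∧ (m22 + 1) * γ13 = 0
        ∧ (m22 + 1) * γ11 + (1 - m11) * γ22 = 0
        ∧ (m22 - 1) * γ12 + (m11 + 1) * γ23 = 0) →
        D r = (TensorProduct.assoc k V V V) (r ⊗ₜ[k] ((m22 * γ11 + γ22) • b 0 + (m11 * γ23) • b 1))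
            + (γ11 • b 0 + (m22 * γ12 + γ23) • b 1) ⊗ₜ[k] r) := by
  have hDr : D r = ∑ i, ∑ j, ∑ l,
      derivAnticommCoeff m11 m22 γ11 γ12 γ13 γ21 γ22 γ23 i j l • b i ⊗ₜ[k] (b j ⊗ₜ[k] b l) := by
    subst hD hr
    exact twistedDerivTensorSq_anticomm b hσ1 hσ2 hδ1 hδ2
  have formula (h : DiagCompatible m11 m22 γ11 γ12 γ13 γ21 γ22 γ23) :
      D r = TensorProduct.assoc k V V V (r ⊗ₜ[k] ((m22 * γ11 + γ22) • b 0 + (m11 * γ23) • b 1))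
        + (γ11 • b 0 + (m22 * γ12 + γ23) • b 1) ⊗ₜ[k] r := by
    rw [hDr, hr, assoc_anticomm_tmul_add_tmul_anticomm, anticommSumCoeff_eq_derivAnticommCoeff h]
  refine ⟨⟨fun hmem => ?_, fun h => ?_⟩, formula⟩
  · obtain ⟨c, c', hcc'⟩ := (mem_range_assoc_mk_sup_range_flip_mk_iff r (D r)).1 hmem
    rw [hDr, ← b.sum_repr c, ← b.sum_repr c', Fin.sum_univ_two, Fin.sum_univ_two, hr,
      assoc_anticomm_tmul_add_tmul_anticomm, b.sum_smul_tmul_tmul_inj] at hcc'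
    exact diagCompatible_of_anticommSumCoeff_eq hcc'
  · exact (mem_range_assoc_mk_sup_range_flip_mk_iff r (D r)).2 ⟨_, _, (formula h).symm⟩

/-- The lemma in Case (ii)(1)① of Section 4.2: quantum plane `k⟨x₁,x₂⟩/(x₁x₂ + x₂x₁)` with diagonal graded automorphism. -/
theorem lemma_quantum_plane_diag {k : Type*} [Field k] [CharZero k]
    {V : Type*} [AddCommGroup V] [Module k V]
    (b : Module.Basis (Fin 2) k V)
    (σ : V →ₗ[k] V) (δ : V →ₗ[k] V ⊗[k] V)
    (m11 m22 : k) (γ11 γ12 γ13 γ21 γ22 γ23 : k)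
    (hσ1 : σ (b 0) = m11 • b 0)
    (hσ2 : σ (b 1) = m22 • b 1)
    (hdet : m11 * m22 ≠ 0)
    (hδ1 : δ (b 0) = γ11 • (b 0 ⊗ₜ[k] b 0) + γ12 • (b 1 ⊗ₜ[k] b 0) + γ13 • (b 1 ⊗ₜ[k] b 1))
    (hδ2 : δ (b 1) = γ21 • (b 0 ⊗ₜ[k] b 0) + γ22 • (b 1 ⊗ₜ[k] b 0) + γ23 • (b 1 ⊗ₜ[k] b 1))
    (D : V ⊗[k] V →ₗ[k] V ⊗[k] (V ⊗[k] V))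
    (hD : D = TensorProduct.map σ δ
        + (TensorProduct.assoc k V V V).toLinearMap ∘ₗ TensorProduct.map δ LinearMap.id)
    (r : V ⊗[k] V) (hr : r = b 0 ⊗ₜ[k] b 1 + b 1 ⊗ₜ[k] b 0) :
    (D r ∈ LinearMap.range
          ((TensorProduct.assoc k V V V).toLinearMap ∘ₗ TensorProduct.mk k (V ⊗[k] V) V r)
        ⊔ LinearMap.range ((TensorProduct.mk k V (V ⊗[k] V)).flip r)
      ↔ ((m11 + 1) * γ21 = 0
        ∧ (m22 + 1) * γ13 = 0
        ∧ (m22 + 1) * γ11 + (1 - m11) * γ22 = 0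
        ∧ (m22 - 1) * γ12 + (m11 + 1) * γ23 = 0))
    ∧ (((m11 + 1) * γ21 = 0
        ∧ (m22 + 1) * γ13 = 0
        ∧ (m22 + 1) * γ11 + (1 - m11) * γ22 = 0
        ∧ (m22 - 1) * γ12 + (m11 + 1) * γ23 = 0) →
        D r = (TensorProduct.assoc k V V V) (r ⊗ₜ[k] ((m22 * γ11 + γ22) • b 0 + (m11 * γ23) • b 1))
            + (γ11 • b 0 + (m22 * γ12 + γ23) • b 1) ⊗ₜ[k] r) :=
  lemma_quantum_plane_diag_general b σ δ m11 m22 γ11 γ12 γ13 γ21 γ22 γ23 hσ1 hσ2 hδ1 hδ2 D hD r hr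

end OrePaper
end

section
/- Suppose σ(x_1) = m_{12} x_2 and σ(x_2) = m_{21} x_1 with m_{12}m_{21} ≠ 0, and let r = x_1⊗x_2 + x_2⊗x_1 ∈ V⊗V. Then D(r) ∈ r⊗V + V⊗r if and only if the following four equations hold: m_{21}γ_{11} + γ_{21} = 0; m_{12}γ_{23} + γ_{13} = 0; γ_{11} − m_{21}γ_{12} + m_{12}γ_{21} + γ_{22} = 0; −γ_{12} + m_{21}γ_{13} + m_{12}γ_{22} + γ_{23} = 0. In that case, D(r) = r⊗δ_r + δ_l⊗r with δ_r = (m_{12}γ_{21} + γ_{22}) x_1 + m_{21}γ_{13} x_2 and δ_l = γ_{11} x_1 + (m_{12}γ_{22} + γ_{23}) x_2. -/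
/-!
Expand `D(r)` and a general element `r ⊗ v + w ⊗ r` in the basis `xᵢ ⊗ xⱼ ⊗ xₗ` of `V^{⊗3}`.
Comparing the eight coefficients, membership becomes solvability of eight linear equations in
the four coordinates of `v` and `w`; two of them do not involve `v, w` at all, and eliminating the
coordinates from the other six leaves the remaining two conditions. Under these conditions the
coordinates are forced to be those of `δ_r` and `δ_l`.
-/

open scoped TensorProduct

namespace OrePaper

open TensorProduct Module

section TwoDimensional

variable {k V : Type*} [CommRing k] [AddCommGroup V] [Module k V]

/-- The degree-2 component of the `σ`-twisted derivation of `T(V)` extending `δ`. -/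
def twistedDerivTwo (σ : V →ₗ[k] V) (δ : V →ₗ[k] V ⊗[k] V) :
    V ⊗[k] V →ₗ[k] V ⊗[k] (V ⊗[k] V) :=
  map σ δ + (TensorProduct.assoc k V V V).toLinearMap ∘ₗ map δ LinearMap.id

theorem mem_range_tmul_sup_range_tmul_iff (r : V ⊗[k] V) (x : V ⊗[k] (V ⊗[k] V)) :
    x ∈ LinearMap.range ((TensorProduct.assoc k V V V).toLinearMap ∘ₗ mk k (V ⊗[k] V) V r)
        ⊔ LinearMap.range ((mk k V (V ⊗[k] V)).flip r) ↔
      ∃ v w : V, x = TensorProduct.assoc k V V V (r ⊗ₜ v) + w ⊗ₜ r := by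
  simp only [Submodule.mem_sup, LinearMap.mem_range, LinearMap.coe_comp, LinearEquiv.coe_coe,
    Function.comp_apply, mk_apply, LinearMap.flip_apply]
  constructor
  · rintro ⟨_, ⟨v, rfl⟩, _, ⟨w, rfl⟩, rfl⟩
    exact ⟨v, w, rfl⟩
  · rintro ⟨v, w, rfl⟩
    exact ⟨_, ⟨v, rfl⟩, _, ⟨w, rfl⟩, rfl⟩

noncomputable def cubeOfCoeffs {ι : Type*} [Fintype ι] (b : Basis ι k V) (c : ι → ι → ι → k) :
    V ⊗[k] (V ⊗[k] V) :=
  ∑ i, ∑ j, ∑ l, c i j l • (b i ⊗ₜ (b j ⊗ₜ b l))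

theorem cubeOfCoeffs_injective {ι : Type*} [Fintype ι] (b : Basis ι k V) :
    Function.Injective (cubeOfCoeffs b) := by
  intro c c' h
  have hc : ∀ c, cubeOfCoeffs b c =
      (b.tensorProduct (b.tensorProduct b)).equivFun.symm (fun p => c p.1 p.2.1 p.2.2) := by
    intro c
    simp [cubeOfCoeffs, Basis.equivFun_symm_apply, Fintype.sum_prod_type]
  rw [hc, hc] at h
  funext i j l
  exact congrFun ((b.tensorProduct (b.tensorProduct b)).equivFun.symm.injective h) (i, j, l)

theorem cubeOfCoeffs_inj {ι : Type*} [Fintype ι] (b : Basis ι k V) {c c' : ι → ι → ι → k} :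
    cubeOfCoeffs b c = cubeOfCoeffs b c' ↔ c = c' :=
  (cubeOfCoeffs_injective b).eq_iff

variable (b : Basis (Fin 2) k V)

theorem assoc_tmul_add_tmul_anticommutator (v w : V) :
    TensorProduct.assoc k V V V ((b 0 ⊗ₜ b 1 + b 1 ⊗ₜ b 0) ⊗ₜ v)
        + w ⊗ₜ (b 0 ⊗ₜ b 1 + b 1 ⊗ₜ b 0) =
      cubeOfCoeffs b
        ![![![0, b.repr w 0], ![b.repr v 0 + b.repr w 0, b.repr v 1]],
          ![![b.repr v 0, b.repr v 1 + b.repr w 1], ![b.repr w 1, 0]]] := by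
  conv_lhs => rw [← b.sum_repr v, ← b.sum_repr w]
  simp only [cubeOfCoeffs, Fin.sum_univ_two, tmul_add, add_tmul, tmul_smul, ← smul_tmul',
    assoc_tmul, map_add, map_smul]
  simp only [Fin.isValue, smul_add, Matrix.cons_val', Matrix.cons_val_zero,
    Matrix.cons_val_fin_one, zero_smul, Matrix.cons_val_one, zero_add, add_zero]
  module

theorem twistedDerivTwo_anticommutator {σ : V →ₗ[k] V} {δ : V →ₗ[k] V ⊗[k] V}
    {m12 m21 γ11 γ12 γ13 γ21 γ22 γ23 : k}
    (hσ1 : σ (b 0) = m12 • b 1) (hσ2 : σ (b 1) = m21 • b 0)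
    (hδ1 : δ (b 0) = γ11 • (b 0 ⊗ₜ[k] b 0) + γ12 • (b 1 ⊗ₜ[k] b 0) + γ13 • (b 1 ⊗ₜ[k] b 1))
    (hδ2 : δ (b 1) = γ21 • (b 0 ⊗ₜ[k] b 0) + γ22 • (b 1 ⊗ₜ[k] b 0) + γ23 • (b 1 ⊗ₜ[k] b 1)) :
    twistedDerivTwo σ δ (b 0 ⊗ₜ b 1 + b 1 ⊗ₜ b 0) =
      cubeOfCoeffs b
        ![![![m21 * γ11 + γ21, γ11], ![m21 * γ12, m21 * γ13]],
          ![![m12 * γ21 + γ22, γ12], ![m12 * γ22 + γ23, m12 * γ23 + γ13]]] := by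
  simp only [twistedDerivTwo, cubeOfCoeffs, Fin.sum_univ_two, LinearMap.add_apply,
    LinearMap.comp_apply, LinearEquiv.coe_coe, map_add, map_tmul, LinearMap.id_apply, hσ1, hσ2,
    hδ1, hδ2, tmul_add, add_tmul, tmul_smul, ← smul_tmul', assoc_tmul, map_smul]
  simp only [Fin.isValue, Matrix.cons_val', Matrix.cons_val_zero, Matrix.cons_val_fin_one,
    Matrix.cons_val_one]
  module

end TwoDimensional

theorem lemma_quantum_plane_antidiag_general {k : Type*} [Field k]
    {V : Type*} [AddCommGroup V] [Module k V]
    (b : Module.Basis (Fin 2) k V)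
    (σ : V →ₗ[k] V) (δ : V →ₗ[k] V ⊗[k] V)
    (m12 m21 : k) (γ11 γ12 γ13 γ21 γ22 γ23 : k)
    (hσ1 : σ (b 0) = m12 • b 1)
    (hσ2 : σ (b 1) = m21 • b 0)
    (hδ1 : δ (b 0) = γ11 • (b 0 ⊗ₜ[k] b 0) + γ12 • (b 1 ⊗ₜ[k] b 0) + γ13 • (b 1 ⊗ₜ[k] b 1))
    (hδ2 : δ (b 1) = γ21 • (b 0 ⊗ₜ[k] b 0) + γ22 • (b 1 ⊗ₜ[k] b 0) + γ23 • (b 1 ⊗ₜ[k] b 1))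
    (D : V ⊗[k] V →ₗ[k] V ⊗[k] (V ⊗[k] V))
    (hD : D = TensorProduct.map σ δ
        + (TensorProduct.assoc k V V V).toLinearMap ∘ₗ TensorProduct.map δ LinearMap.id)
    (r : V ⊗[k] V) (hr : r = b 0 ⊗ₜ[k] b 1 + b 1 ⊗ₜ[k] b 0) :
    (D r ∈ LinearMap.range
          ((TensorProduct.assoc k V V V).toLinearMap ∘ₗ TensorProduct.mk k (V ⊗[k] V) V r)
        ⊔ LinearMap.range ((TensorProduct.mk k V (V ⊗[k] V)).flip r)
      ↔ (m21 * γ11 + γ21 = 0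
        ∧ m12 * γ23 + γ13 = 0
        ∧ γ11 - m21 * γ12 + m12 * γ21 + γ22 = 0
        ∧ -γ12 + m21 * γ13 + m12 * γ22 + γ23 = 0))
    ∧ ((m21 * γ11 + γ21 = 0
        ∧ m12 * γ23 + γ13 = 0
        ∧ γ11 - m21 * γ12 + m12 * γ21 + γ22 = 0
        ∧ -γ12 + m21 * γ13 + m12 * γ22 + γ23 = 0) →
        D r = (TensorProduct.assoc k V V V) (r ⊗ₜ[k] ((m12 * γ21 + γ22) • b 0 + (m21 * γ13) • b 1))
            + (γ11 • b 0 + (m12 * γ22 + γ23) • b 1) ⊗ₜ[k] r) := by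
  subst hD hr
  have hDr := twistedDerivTwo_anticommutator b hσ1 hσ2 hδ1 hδ2
  rw [twistedDerivTwo] at hDr
  refine ⟨⟨fun hmem => ?_,
    fun h => (mem_range_tmul_sup_range_tmul_iff _ _).mpr ⟨_, _, ?formula h⟩⟩, ?formula⟩
  · obtain ⟨v, w, hvw⟩ := (mem_range_tmul_sup_range_tmul_iff _ _).mp hmem
    rw [hDr, assoc_tmul_add_tmul_anticommutator, cubeOfCoeffs_inj] at hvw
    simp only [Fin.isValue, Matrix.vecCons_inj, and_true] at hvw
    obtain ⟨⟨⟨h000, h001⟩, h010, h011⟩, ⟨h100, h101⟩, h110, h111⟩ := hvw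
    exact ⟨h000, h111, by linear_combination h001 - h010 + h100,
      by linear_combination h011 - h101 + h110⟩
  · rintro ⟨h1, h2, h3, h4⟩
    rw [hDr, assoc_tmul_add_tmul_anticommutator, cubeOfCoeffs_inj]
    simp only [Fin.isValue, map_add, map_smul, Basis.repr_self, Finsupp.smul_single, smul_eq_mul,
      mul_one, Finsupp.single_add, Finsupp.single_mul, Finsupp.coe_add, Pi.add_apply,
      Finsupp.single_eq_same, Finsupp.mul_apply, ne_eq, zero_ne_one, not_false_eq_true,
      Finsupp.single_eq_of_ne, mul_zero, add_zero, one_ne_zero, zero_add, Matrix.vecCons_inj,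
      and_true, true_and]
    exact ⟨⟨h1, by linear_combination -h3⟩, by linear_combination -h4, h2⟩

/-- The lemma in Case (ii)(1)② of Section 4.2: quantum plane `k⟨x₁,x₂⟩/(x₁x₂ + x₂x₁)` with antidiagonal graded automorphism. -/
theorem lemma_quantum_plane_antidiag {k : Type*} [Field k] [CharZero k]
    {V : Type*} [AddCommGroup V] [Module k V]
    (b : Module.Basis (Fin 2) k V)
    (σ : V →ₗ[k] V) (δ : V →ₗ[k] V ⊗[k] V)
    (m12 m21 : k) (γ11 γ12 γ13 γ21 γ22 γ23 : k)
    (hσ1 : σ (b 0) = m12 • b 1)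
    (hσ2 : σ (b 1) = m21 • b 0)
    (hdet : m12 * m21 ≠ 0)
    (hδ1 : δ (b 0) = γ11 • (b 0 ⊗ₜ[k] b 0) + γ12 • (b 1 ⊗ₜ[k] b 0) + γ13 • (b 1 ⊗ₜ[k] b 1))
    (hδ2 : δ (b 1) = γ21 • (b 0 ⊗ₜ[k] b 0) + γ22 • (b 1 ⊗ₜ[k] b 0) + γ23 • (b 1 ⊗ₜ[k] b 1))
    (D : V ⊗[k] V →ₗ[k] V ⊗[k] (V ⊗[k] V))
    (hD : D = TensorProduct.map σ δ
        + (TensorProduct.assoc k V V V).toLinearMap ∘ₗ TensorProduct.map δ LinearMap.id)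
    (r : V ⊗[k] V) (hr : r = b 0 ⊗ₜ[k] b 1 + b 1 ⊗ₜ[k] b 0) :
    (D r ∈ LinearMap.range
          ((TensorProduct.assoc k V V V).toLinearMap ∘ₗ TensorProduct.mk k (V ⊗[k] V) V r)
        ⊔ LinearMap.range ((TensorProduct.mk k V (V ⊗[k] V)).flip r)
      ↔ (m21 * γ11 + γ21 = 0
        ∧ m12 * γ23 + γ13 = 0
        ∧ γ11 - m21 * γ12 + m12 * γ21 + γ22 = 0
        ∧ -γ12 + m21 * γ13 + m12 * γ22 + γ23 = 0))
    ∧ ((m21 * γ11 + γ21 = 0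
        ∧ m12 * γ23 + γ13 = 0
        ∧ γ11 - m21 * γ12 + m12 * γ21 + γ22 = 0
        ∧ -γ12 + m21 * γ13 + m12 * γ22 + γ23 = 0) →
        D r = (TensorProduct.assoc k V V V) (r ⊗ₜ[k] ((m12 * γ21 + γ22) • b 0 + (m21 * γ13) • b 1))
            + (γ11 • b 0 + (m12 * γ22 + γ23) • b 1) ⊗ₜ[k] r) :=
  lemma_quantum_plane_antidiag_general b σ δ m12 m21 γ11 γ12 γ13 γ21 γ22 γ23 hσ1 hσ2 hδ1 hδ2 D hD r
    hr

end OrePaper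
end

section
/- Let q ∈ k with q ≠ 0, q ≠ 1 and q ≠ −1. Suppose σ(x_1) = m_{11} x_1 and σ(x_2) = m_{22} x_2 with m_{11}m_{22} ≠ 0, and let r = x_1⊗x_2 − q·x_2⊗x_1 ∈ V⊗V. Then D(r) ∈ r⊗V + V⊗r if and only if the following four equations hold: (m_{11}−q)γ_{21} = 0; (1−q m_{22})γ_{13} = 0; (m_{22}−q)γ_{11} + (1−m_{11})γ_{22} = 0; (m_{22}−1)γ_{12} + (1−q m_{11})γ_{23} = 0. In that case, D(r) = r⊗δ_r + δ_l⊗r with δ_r = (m_{22}γ_{11} + γ_{22}) x_1 + m_{11}γ_{23} x_2 and δ_l = γ_{11} x_1 + (m_{22}γ_{12} + γ_{23}) x_2. -/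
/-!
Modulo `r ⊗ V + V ⊗ r`, the tensor `D r` reduces to a combination of `x₁x₁x₁`, `x₂x₂x₂`,
`x₁x₂x₁` and `x₂x₁x₂` whose four coefficients are exactly the four expressions of the
statement, the witness being `r ⊗ δ_r + δ_l ⊗ r`. Since `q` is not a zero divisor, reading off
coordinates shows that the span of these four tensors meets `r ⊗ V + V ⊗ r` only in `0`.
-/

open scoped nonZeroDivisors

namespace OrePaper

open TensorProduct

section

variable {R V : Type*} [CommRing R] [AddCommGroup V] [Module R V]

def twistedDerivDegTwo (σ : V →ₗ[R] V) (δ : V →ₗ[R] V ⊗[R] V) :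
    V ⊗[R] V →ₗ[R] V ⊗[R] (V ⊗[R] V) :=
  map σ δ + (TensorProduct.assoc R V V V).toLinearMap ∘ₗ map δ LinearMap.id

/-- `r ⊗ V + V ⊗ r`, inside `V ⊗ (V ⊗ V)`. -/
def degreeThreeIdeal (r : V ⊗[R] V) : Submodule R (V ⊗[R] (V ⊗[R] V)) :=
  LinearMap.range ((TensorProduct.assoc R V V V).toLinearMap ∘ₗ TensorProduct.mk R (V ⊗[R] V) V r)
    ⊔ LinearMap.range ((TensorProduct.mk R V (V ⊗[R] V)).flip r)

theorem mem_degreeThreeIdeal_iff {r : V ⊗[R] V} {w : V ⊗[R] (V ⊗[R] V)} :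
    w ∈ degreeThreeIdeal r ↔ ∃ u v : V, TensorProduct.assoc R V V V (r ⊗ₜ u) + v ⊗ₜ r = w := by
  simp only [degreeThreeIdeal, Submodule.mem_sup, LinearMap.mem_range, LinearMap.coe_comp,
    LinearEquiv.coe_coe, Function.comp_apply, mk_apply, LinearMap.flip_apply]
  constructor
  · rintro ⟨_, ⟨u, rfl⟩, _, ⟨v, rfl⟩, rfl⟩
    exact ⟨u, v, rfl⟩
  · rintro ⟨u, v, rfl⟩
    exact ⟨_, ⟨u, rfl⟩, _, ⟨v, rfl⟩, rfl⟩

theorem tmul_add_tmul_mem_degreeThreeIdeal (r : V ⊗[R] V) (u v : V) :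
    TensorProduct.assoc R V V V (r ⊗ₜ u) + v ⊗ₜ r ∈ degreeThreeIdeal r :=
  mem_degreeThreeIdeal_iff.mpr ⟨u, v, rfl⟩

variable (b : Module.Basis (Fin 2) R V)

noncomputable def quantumRelation (q : R) : V ⊗[R] V :=
  b 0 ⊗ₜ b 1 - q • (b 1 ⊗ₜ b 0)

theorem twistedDerivDegTwo_quantumRelation {σ : V →ₗ[R] V} {δ : V →ₗ[R] V ⊗[R] V}
    (q : R) {m11 m22 γ11 γ12 γ13 γ21 γ22 γ23 : R}
    (hσ1 : σ (b 0) = m11 • b 0) (hσ2 : σ (b 1) = m22 • b 1)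
    (hδ1 : δ (b 0) = γ11 • (b 0 ⊗ₜ b 0) + γ12 • (b 1 ⊗ₜ b 0) + γ13 • (b 1 ⊗ₜ b 1))
    (hδ2 : δ (b 1) = γ21 • (b 0 ⊗ₜ b 0) + γ22 • (b 1 ⊗ₜ b 0) + γ23 • (b 1 ⊗ₜ b 1)) :
    twistedDerivDegTwo σ δ (quantumRelation b q) =
      (TensorProduct.assoc R V V V
          (quantumRelation b q ⊗ₜ ((m22 * γ11 + γ22) • b 0 + (m11 * γ23) • b 1))
        + (γ11 • b 0 + (m22 * γ12 + γ23) • b 1) ⊗ₜ quantumRelation b q)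
      + (((m11 - q) * γ21) • (b 0 ⊗ₜ (b 0 ⊗ₜ b 0))
        + ((1 - q * m22) * γ13) • (b 1 ⊗ₜ (b 1 ⊗ₜ b 1))
        - ((m22 - q) * γ11 + (1 - m11) * γ22) • (b 0 ⊗ₜ (b 1 ⊗ₜ b 0))
        - ((m22 - 1) * γ12 + (1 - q * m11) * γ23) • (b 1 ⊗ₜ (b 0 ⊗ₜ b 1))) := by
  simp only [twistedDerivDegTwo, quantumRelation, map_sub, map_smul, map_add,
    LinearMap.add_apply, LinearMap.coe_comp, Function.comp_apply, LinearEquiv.coe_coe, map_tmul,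
    LinearMap.id_coe, id_eq, hσ1, hσ2, hδ1, hδ2, tmul_add, add_tmul, tmul_sub, sub_tmul,
    tmul_smul, smul_tmul, assoc_tmul]
  module

theorem eq_zero_of_smul_add_smul_sub_smul_sub_smul_mem_degreeThreeIdeal {q a c d e : R}
    (hq : q ∈ R⁰)
    (hmem : a • (b 0 ⊗ₜ (b 0 ⊗ₜ b 0)) + c • (b 1 ⊗ₜ (b 1 ⊗ₜ b 1))
        - d • (b 0 ⊗ₜ (b 1 ⊗ₜ b 0)) - e • (b 1 ⊗ₜ (b 0 ⊗ₜ b 1))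
      ∈ degreeThreeIdeal (quantumRelation b q)) :
    a = 0 ∧ c = 0 ∧ d = 0 ∧ e = 0 := by
  obtain ⟨u, v, huv⟩ := mem_degreeThreeIdeal_iff.mp hmem
  rw [← b.sum_repr u, ← b.sum_repr v] at huv
  simp only [Fin.sum_univ_two, quantumRelation, tmul_add, add_tmul, tmul_sub, sub_tmul,
    tmul_smul, smul_tmul, map_add, map_sub, map_smul, assoc_tmul] at huv
  have coord (t : Fin 2 × Fin 2 × Fin 2) :=
    DFunLike.congr_fun (congrArg (b.tensorProduct (b.tensorProduct b)).repr huv) t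
  have c000 := coord (0, 0, 0)
  have c001 := coord (0, 0, 1)
  have c010 := coord (0, 1, 0)
  have c011 := coord (0, 1, 1)
  have c100 := coord (1, 0, 0)
  have c101 := coord (1, 0, 1)
  have c110 := coord (1, 1, 0)
  have c111 := coord (1, 1, 1)
  simp only [smul_add, map_add, map_smul, map_sub, Finsupp.coe_add, Finsupp.coe_smul,
    Finsupp.coe_sub, Pi.add_apply, Pi.smul_apply, Pi.sub_apply,
    Module.Basis.tensorProduct_repr_tmul_apply, Module.Basis.repr_self, Finsupp.single_eq_same,
    ne_eq, zero_ne_one, not_false_eq_true, Finsupp.single_eq_of_ne, smul_eq_mul, mul_zero,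
    mul_one, sub_self, add_zero, sub_zero, one_ne_zero, zero_add, zero_sub, mul_neg, neg_eq_zero]
    at c000 c001 c010 c011 c100 c101 c110 c111
  -- only `r ⊗ u` reaches `x₂x₁x₁` and only `v ⊗ r` reaches `x₂x₂x₁`, each with coefficient `-q`
  have hu0 : b.repr u 0 = 0 := hq.2 _ c100
  have hv1 : b.repr v 1 = 0 := hq.1 _ c110
  refine ⟨c000.symm, c111.symm, ?_, ?_⟩
  · linear_combination c010 - hu0 + q * c001
  · linear_combination c101 - hv1 + q * c011

end

theorem lemma_quantum_plane_q_general {k : Type*} [Field k]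
    {V : Type*} [AddCommGroup V] [Module k V]
    (b : Module.Basis (Fin 2) k V)
    (σ : V →ₗ[k] V) (δ : V →ₗ[k] V ⊗[k] V)
    (q m11 m22 : k) (γ11 γ12 γ13 γ21 γ22 γ23 : k)
    (hq0 : q ≠ 0)
    (hσ1 : σ (b 0) = m11 • b 0)
    (hσ2 : σ (b 1) = m22 • b 1)
    (hδ1 : δ (b 0) = γ11 • (b 0 ⊗ₜ[k] b 0) + γ12 • (b 1 ⊗ₜ[k] b 0) + γ13 • (b 1 ⊗ₜ[k] b 1))
    (hδ2 : δ (b 1) = γ21 • (b 0 ⊗ₜ[k] b 0) + γ22 • (b 1 ⊗ₜ[k] b 0) + γ23 • (b 1 ⊗ₜ[k] b 1))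
    (D : V ⊗[k] V →ₗ[k] V ⊗[k] (V ⊗[k] V))
    (hD : D = TensorProduct.map σ δ
        + (TensorProduct.assoc k V V V).toLinearMap ∘ₗ TensorProduct.map δ LinearMap.id)
    (r : V ⊗[k] V) (hr : r = b 0 ⊗ₜ[k] b 1 - q • (b 1 ⊗ₜ[k] b 0)) :
    (D r ∈ LinearMap.range
          ((TensorProduct.assoc k V V V).toLinearMap ∘ₗ TensorProduct.mk k (V ⊗[k] V) V r)
        ⊔ LinearMap.range ((TensorProduct.mk k V (V ⊗[k] V)).flip r)
      ↔ ((m11 - q) * γ21 = 0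
        ∧ (1 - q * m22) * γ13 = 0
        ∧ (m22 - q) * γ11 + (1 - m11) * γ22 = 0
        ∧ (m22 - 1) * γ12 + (1 - q * m11) * γ23 = 0))
    ∧ (((m11 - q) * γ21 = 0
        ∧ (1 - q * m22) * γ13 = 0
        ∧ (m22 - q) * γ11 + (1 - m11) * γ22 = 0
        ∧ (m22 - 1) * γ12 + (1 - q * m11) * γ23 = 0) →
        D r = (TensorProduct.assoc k V V V) (r ⊗ₜ[k] ((m22 * γ11 + γ22) • b 0 + (m11 * γ23) • b 1))
            + (γ11 • b 0 + (m22 * γ12 + γ23) • b 1) ⊗ₜ[k] r) := by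
  obtain rfl : D = twistedDerivDegTwo σ δ := hD
  obtain rfl : r = quantumRelation b q := hr
  have hDr := twistedDerivDegTwo_quantumRelation b q hσ1 hσ2 hδ1 hδ2
  refine ⟨⟨fun hmem => ?_, fun ⟨h1, h2, h3, h4⟩ => ?_⟩, fun ⟨h1, h2, h3, h4⟩ => ?_⟩
  · rw [hDr] at hmem
    exact eq_zero_of_smul_add_smul_sub_smul_sub_smul_mem_degreeThreeIdeal b
      (mem_nonZeroDivisors_of_ne_zero hq0)
      ((Submodule.add_mem_iff_right _ (tmul_add_tmul_mem_degreeThreeIdeal _ _ _)).mp hmem)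
  · rw [hDr, h1, h2, h3, h4]
    simp only [zero_smul, add_zero, sub_zero]
    exact tmul_add_tmul_mem_degreeThreeIdeal _ _ _
  · rw [hDr, h1, h2, h3, h4]
    simp only [zero_smul, add_zero, sub_zero]

/-- The lemma in Case (ii)(2) of Section 4.2: quantum plane `k⟨x₁,x₂⟩/(x₁x₂ − q x₂x₁)` with `q ≠ 0, ±1` and diagonal graded automorphism. -/
theorem lemma_quantum_plane_q {k : Type*} [Field k] [CharZero k]
    {V : Type*} [AddCommGroup V] [Module k V]
    (b : Module.Basis (Fin 2) k V)
    (σ : V →ₗ[k] V) (δ : V →ₗ[k] V ⊗[k] V)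
    (q m11 m22 : k) (γ11 γ12 γ13 γ21 γ22 γ23 : k)
    (hq0 : q ≠ 0) (hq1 : q ≠ 1) (hq2 : q ≠ -1)
    (hσ1 : σ (b 0) = m11 • b 0)
    (hσ2 : σ (b 1) = m22 • b 1)
    (hdet : m11 * m22 ≠ 0)
    (hδ1 : δ (b 0) = γ11 • (b 0 ⊗ₜ[k] b 0) + γ12 • (b 1 ⊗ₜ[k] b 0) + γ13 • (b 1 ⊗ₜ[k] b 1))
    (hδ2 : δ (b 1) = γ21 • (b 0 ⊗ₜ[k] b 0) + γ22 • (b 1 ⊗ₜ[k] b 0) + γ23 • (b 1 ⊗ₜ[k] b 1))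
    (D : V ⊗[k] V →ₗ[k] V ⊗[k] (V ⊗[k] V))
    (hD : D = TensorProduct.map σ δ
        + (TensorProduct.assoc k V V V).toLinearMap ∘ₗ TensorProduct.map δ LinearMap.id)
    (r : V ⊗[k] V) (hr : r = b 0 ⊗ₜ[k] b 1 - q • (b 1 ⊗ₜ[k] b 0)) :
    (D r ∈ LinearMap.range
          ((TensorProduct.assoc k V V V).toLinearMap ∘ₗ TensorProduct.mk k (V ⊗[k] V) V r)
        ⊔ LinearMap.range ((TensorProduct.mk k V (V ⊗[k] V)).flip r)
      ↔ ((m11 - q) * γ21 = 0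
        ∧ (1 - q * m22) * γ13 = 0
        ∧ (m22 - q) * γ11 + (1 - m11) * γ22 = 0
        ∧ (m22 - 1) * γ12 + (1 - q * m11) * γ23 = 0))
    ∧ (((m11 - q) * γ21 = 0
        ∧ (1 - q * m22) * γ13 = 0
        ∧ (m22 - q) * γ11 + (1 - m11) * γ22 = 0
        ∧ (m22 - 1) * γ12 + (1 - q * m11) * γ23 = 0) →
        D r = (TensorProduct.assoc k V V V) (r ⊗ₜ[k] ((m22 * γ11 + γ22) • b 0 + (m11 * γ23) • b 1))
            + (γ11 • b 0 + (m22 * γ12 + γ23) • b 1) ⊗ₜ[k] r) :=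
  lemma_quantum_plane_q_general b σ δ q m11 m22 γ11 γ12 γ13 γ21 γ22 γ23 hq0 hσ1 hσ2 hδ1 hδ2 D hD r
    hr

end OrePaper
end
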